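/- The function f : BM^2 → Pow(BM^2) defined by f(x) := ResM(x) \ {MM} (copy a 2-bit input, allowing metastability to resolve arbitrarily except that not both output bits may be M) has no natural subfunction; consequently f ∉ Fun_S, i.e., no circuit with only simple registers implements f. -/

import Mathlib

set_option linter.unusedVariables false

attribute [local instance] Classical.propDecidable

/-- Signal values: stable `zero`, `one`, and metastable `meta`. -/
inductive BM : Type
  | zero
  | one
  | metastable
  deriving DecidableEq

/-- Embedding of stable Boolean values into `BM`. -/
def BM.ofBool : Bool → BM
  | false => BM.zero
  | true => BM.one

/-- `inResM x y` means `y ∈ ResM(x)`, the set of partial resolutions of `x`. -/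
def inResM {k : ℕ} (x y : Fin k → BM) : Prop :=
  ∀ i, x i = y i ∨ x i = BM.metastable

/-- `inRes x y` means `y ∈ Res(x)`, i.e. `y` is a complete (stable) resolution of `x`. -/
def inRes {k : ℕ} (x y : Fin k → BM) : Prop :=
  inResM x y ∧ ∀ i, y i ≠ BM.metastable

/-- The complete resolutions of `x`, viewed as Boolean words. -/
def boolRes {k : ℕ} (x : Fin k → BM) : Set (Fin k → Bool) :=
  { z | ∀ i, x i = BM.ofBool (z i) ∨ x i = BM.metastable }

/-- The metastable (Kleene) extension `f_M : BM^k → BM` of a Boolean function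
`f : B^k → B`: it outputs a stable value `b` iff all complete resolutions of the
input evaluate to `b` under `f`, and `meta` otherwise. -/
noncomputable def kleene {k : ℕ} (f : (Fin k → Bool) → Bool) (x : Fin k → BM) : BM :=
  if ∀ z ∈ boolRes x, f z = false then BM.zero
  else if ∀ z ∈ boolRes x, f z = true then BM.one
  else BM.metastable

/-- Combinational logic with `m` input nodes: formulas built from inputs,
`BM`-constants (gates of indegree 0), and gates computing the metastable extension
of a Boolean function of their in-neighbors.  (A DAG evaluates exactly like the
formula obtained by unsharing, so this faithfully captures evaluation of
combinational logic DAGs.) -/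
inductive Comb (m : ℕ) : Type
  | input : Fin m → Comb m
  | const : BM → Comb m
  | gate : (j : ℕ) → ((Fin j → Bool) → Bool) → (Fin j → Comb m) → Comb m

/-- Recursive evaluation of combinational logic on input `x ∈ BM^m`. -/
noncomputable def Comb.eval {m : ℕ} (x : Fin m → BM) : Comb m → BM
  | .input i => x i
  | .const b => b
  | .gate _ f cs => kleene f (fun t => (cs t).eval x)

/-- Register types: simple, mask-0, mask-1. -/
inductive RegType : Type
  | simple
  | mask0
  | mask1
  deriving DecidableEq

/-- `regRead t b (o, b')` holds iff a register of type `t` in state `b` can be read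
with read value `o`, moving to state `b'`:  a register in a stable state yields that
state and keeps it; a simple register in state `meta` yields `meta` and stays `meta`;
a mask-`c` register in state `meta` either yields `c` staying in state `meta`, or
yields `meta` changing its state to `1 - c`. -/
def regRead : RegType → BM → BM × BM → Prop
  | _, BM.zero, p => p = (BM.zero, BM.zero)
  | _, BM.one, p => p = (BM.one, BM.one)
  | RegType.simple, BM.metastable, p => p = (BM.metastable, BM.metastable)
  | RegType.mask0, BM.metastable, p => p = (BM.zero, BM.metastable) ∨ p = (BM.metastable, BM.one)
  | RegType.mask1, BM.metastable, p => p = (BM.one, BM.metastable) ∨ p = (BM.metastable, BM.zero)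

/-- A circuit with `m` input, `k` local and `n` output registers: a type for each
register, combinational logic with `m + k` input nodes (one per non-output register)
and `k + n` output nodes (one per non-input register), and an initialization of the
non-input registers. -/
structure Circuit (m k n : ℕ) : Type where
  inType : Fin m → RegType
  locType : Fin k → RegType
  outType : Fin n → RegType
  logic : Fin (k + n) → Comb (m + k)
  init : Fin (k + n) → BM

/-- A state of a circuit: values of input, local, and output registers. -/
structure CState (m k n : ℕ) : Type where
  inp : Fin m → BM
  loc : Fin k → BM
  out : Fin n → BM

/-- A state as a word in `BM^{m+k+n}`. -/
def CState.toVec {m k n : ℕ} (s : CState m k n) : Fin (m + (k + n)) → BM :=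
  Fin.append s.inp (Fin.append s.loc s.out)

/-- Read phase: `o ∈ BM^{m+k}` are possible read values of the non-output registers
in state `s`, and `ι'` the corresponding successor states of the input registers. -/
def ReadRel {m k n : ℕ} (C : Circuit m k n) (s : CState m k n)
    (o : Fin (m + k) → BM) (ι' : Fin m → BM) : Prop :=
  (∀ i : Fin m, regRead (C.inType i) (s.inp i) (o (Fin.castAdd k i), ι' i)) ∧
  (∀ j : Fin k, ∃ st', regRead (C.locType j) (s.loc j) (o (Fin.natAdd m j), st'))

/-- Evaluation phase: `f^G` applied to the read values. -/
noncomputable def evalLogic {m k n : ℕ} (C : Circuit m k n) (o : Fin (m + k) → BM) :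
    Fin (k + n) → BM :=
  fun j => (C.logic j).eval o

/-- `Write^C(s)`: possible values written to the non-input registers. -/
def WriteSet {m k n : ℕ} (C : Circuit m k n) (s : CState m k n) :
    Set (Fin (k + n) → BM) :=
  { w | ∃ o ι', ReadRel C s o ι' ∧ inResM (evalLogic C o) w }

/-- Successor-state relation: read all non-output registers, evaluate the logic,
and write an arbitrary partial resolution of the result to the non-input registers. -/
def Succ {m k n : ℕ} (C : Circuit m k n) (s s' : CState m k n) : Prop :=
  ∃ o ι', ReadRel C s o ι' ∧ s'.inp = ι' ∧
    inResM (evalLogic C o) (Fin.append s'.loc s'.out)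

/-- `reach C r s₀ = S^C_r(s₀)`: states reachable in `r` rounds from `s₀`. -/
def reach {m k n : ℕ} (C : Circuit m k n) : ℕ → CState m k n → Set (CState m k n)
  | 0, s => {s}
  | r + 1, s => { t | ∃ u ∈ reach C r s, Succ C u t }

/-- The initial state of `C` with input `ι`. -/
def initState {m k n : ℕ} (C : Circuit m k n) (ι : Fin m → BM) : CState m k n :=
  ⟨ι, fun j => C.init (Fin.castAdd n j), fun j => C.init (Fin.natAdd k j)⟩

/-- `C_r(ι)`: possible outputs after `r` rounds on input `ι`. -/
def Cout {m k n : ℕ} (C : Circuit m k n) (r : ℕ) (ι : Fin m → BM) :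
    Set (Fin n → BM) :=
  { y | ∃ s ∈ reach C r (initState C ι), y = s.out }

/-- `r` rounds of `C` implement `f` iff `C_r(ι) ⊆ f(ι)` for all inputs `ι`. -/
def Implements {m k n : ℕ} (C : Circuit m k n) (r : ℕ)
    (f : (Fin m → BM) → Set (Fin n → BM)) : Prop :=
  ∀ ι, Cout C r ι ⊆ f ι

/-- All registers of the circuit are simple. -/
def OnlySimple {m k n : ℕ} (C : Circuit m k n) : Prop :=
  (∀ i, C.inType i = RegType.simple) ∧ (∀ j, C.locType j = RegType.simple) ∧
    (∀ j, C.outType j = RegType.simple)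

/-- `Fun_S^r`: functions implementable by `r` rounds of circuits with only simple
registers. -/
def FunS (r m n : ℕ) : Set ((Fin m → BM) → Set (Fin n → BM)) :=
  { f | ∃ k, ∃ C : Circuit m k n, OnlySimple C ∧ Implements C r f }

/-- `Fun_M^r`: functions implementable by `r` rounds of circuits with arbitrary
register types. -/
def FunM (r m n : ℕ) : Set ((Fin m → BM) → Set (Fin n → BM)) :=
  { f | ∃ k, ∃ C : Circuit m k n, Implements C r f }

/-- A pivotal sequence over `BM^N`: consecutive elements differ in exactly one bit,
and that bit is `meta` in one of the two elements. -/
def PivotalSeq {N ℓ : ℕ} (x : Fin (ℓ + 1) → Fin N → BM) : Prop :=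
  ∀ i : Fin ℓ,
    ∃ j : Fin N,
      x i.castSucc j ≠ x i.succ j ∧
      (x i.castSucc j = BM.metastable ∨ x i.succ j = BM.metastable) ∧
      ∀ j' : Fin N, x i.castSucc j' ≠ x i.succ j' → j' = j

/-- A function `f : BM^m → Pow(BM^n)` is natural iff it is bit-wise and closed
(a product of component functions each taking values in `{{0}, {1}, BM}`)
and specific (stabilizing the input restricts the output). -/
def IsNatural {m n : ℕ} (f : (Fin m → BM) → Set (Fin n → BM)) : Prop :=
  (∃ g : Fin n → (Fin m → BM) → Set BM,
      (∀ i x, g i x = {BM.zero} ∨ g i x = {BM.one} ∨ g i x = (Set.univ : Set BM)) ∧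
      (∀ x, f x = { y | ∀ i, y i ∈ g i x })) ∧
  (∀ x y, inRes x y → f y ⊆ f x)

/-- The `i`-th component of the metastable closure of `f : B^m → B^n`. -/
noncomputable def mclosureC {m n : ℕ} (f : (Fin m → Bool) → Fin n → Bool)
    (x : Fin m → BM) (i : Fin n) : Set BM :=
  if ∀ z ∈ boolRes x, f z i = false then {BM.zero}
  else if ∀ z ∈ boolRes x, f z i = true then {BM.one}
  else Set.univ

/-- The metastable closure `[f]_M : BM^m → Pow(BM^n)` of `f : B^m → B^n`. -/
noncomputable def mclosure {m n : ℕ} (f : (Fin m → Bool) → Fin n → Bool)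
    (x : Fin m → BM) : Set (Fin n → BM) :=
  { y | ∀ i, y i ∈ mclosureC f x i }

/-- The function copying a 2-bit input, allowing metastability to resolve to
anything except `MM`. -/
def copyNotMM : (Fin 2 → BM) → Set (Fin 2 → BM) := fun x =>
  { y | inResM x y ∧ y ≠ fun _ => BM.metastable }

/-!
A natural subfunction `g` of `copyNotMM` satisfies `00 ∈ g 00` and `11 ∈ g 11`, because `g`
has nonempty values and a stable word has no partial resolution but itself; by specificity both
lie in `g MM`. As `g MM` is a product of closed components, it then contains the superposition
`MM` of `00` and `11`, which `copyNotMM MM` excludes. On the other hand, in its first round a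
circuit with only simple registers reads its inputs verbatim and its local registers at their
initial values, so it can output every partial resolution of the monotone map sending `ι` to
the logic evaluated on these read values; that set-valued map is a natural subfunction of
anything the circuit implements.
-/

lemma inResM_refl {k : ℕ} (x : Fin k → BM) : inResM x x := fun _ => Or.inl rfl

lemma inResM_trans {k : ℕ} {a b c : Fin k → BM} (hab : inResM a b) (hbc : inResM b c) :
    inResM a c := fun i =>
  (hab i).elim (fun h => (hbc i).imp (h.trans ·) (h.trans ·)) Or.inr

lemma inResM.append {m n : ℕ} {x y : Fin m → BM} {x' y' : Fin n → BM}
    (h : inResM x y) (h' : inResM x' y') : inResM (Fin.append x x') (Fin.append y y') := by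
  intro i
  induction i using Fin.addCases with
  | left i => simpa only [Fin.append_left] using h i
  | right i => simpa only [Fin.append_right] using h' i

lemma eq_of_inResM_of_stable {k : ℕ} {x y : Fin k → BM} (hx : ∀ i, x i ≠ BM.metastable)
    (h : inResM x y) : y = x :=
  funext fun i => ((h i).resolve_right (hx i)).symm

lemma boolRes_anti {k : ℕ} {a a' : Fin k → BM} (h : inResM a a') : boolRes a' ⊆ boolRes a :=
  fun _ hz i => (h i).elim (fun ha => (hz i).imp (ha.trans ·) (ha.trans ·)) Or.inr

lemma boolRes_nonempty {k : ℕ} (a : Fin k → BM) : (boolRes a).Nonempty := by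
  refine ⟨fun i => a i = BM.one, fun i => ?_⟩
  cases h : a i <;> simp [h, BM.ofBool]

lemma kleene_eq_or_metastable {k : ℕ} (f : (Fin k → Bool) → Bool) {a a' : Fin k → BM}
    (h : inResM a a') : kleene f a = kleene f a' ∨ kleene f a = BM.metastable := by
  have hsub := boolRes_anti h
  unfold kleene
  by_cases h0 : ∀ z ∈ boolRes a, f z = false
  · rw [if_pos h0, if_pos fun z hz => h0 z (hsub hz)]
    exact Or.inl rfl
  by_cases h1 : ∀ z ∈ boolRes a, f z = true
  · obtain ⟨z, hz⟩ := boolRes_nonempty a'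
    have h0' : ¬ ∀ z ∈ boolRes a', f z = false := fun h => by
      simpa [h z hz] using h1 z (hsub hz)
    rw [if_neg h0, if_neg h0', if_pos h1, if_pos fun z hz => h1 z (hsub hz)]
    exact Or.inl rfl
  · rw [if_neg h0, if_neg h1]
    exact Or.inr rfl

lemma Comb.eval_eq_or_metastable {m : ℕ} {x x' : Fin m → BM} (h : inResM x x') (c : Comb m) :
    c.eval x = c.eval x' ∨ c.eval x = BM.metastable := by
  induction c with
  | input i => exact h i
  | const b => exact Or.inl rfl
  | gate j f cs ih => exact kleene_eq_or_metastable f ih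

lemma evalLogic_inResM {m k n : ℕ} (C : Circuit m k n) {o o' : Fin (m + k) → BM}
    (h : inResM o o') : inResM (evalLogic C o) (evalLogic C o') :=
  fun j => (C.logic j).eval_eq_or_metastable h

def BM.resM : BM → Set BM
  | BM.zero => {BM.zero}
  | BM.one => {BM.one}
  | BM.metastable => Set.univ

lemma BM.resM_closed (a : BM) :
    a.resM = {BM.zero} ∨ a.resM = {BM.one} ∨ a.resM = Set.univ := by
  cases a <;> simp [BM.resM]

lemma BM.mem_resM {a b : BM} : b ∈ a.resM ↔ a = b ∨ a = BM.metastable := by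
  cases a <;> cases b <;> simp [BM.resM]

lemma isNatural_setOf_inResM {m n : ℕ} (v : (Fin m → BM) → Fin n → BM)
    (hv : ∀ x y, inRes x y → inResM (v x) (v y)) :
    IsNatural fun x => {y | inResM (v x) y} := by
  refine ⟨⟨fun i x => (v x i).resM, fun i x => (v x i).resM_closed, fun x => ?_⟩,
    fun x y hxy => ?_⟩
  · ext y
    simp only [Set.mem_ofPred_eq, BM.mem_resM, inResM]
  · exact fun z hz => inResM_trans (hv x y hxy) hz

lemma IsNatural.nonempty {m n : ℕ} {g : (Fin m → BM) → Set (Fin n → BM)} (hg : IsNatural g)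
    (x : Fin m → BM) : (g x).Nonempty := by
  obtain ⟨⟨gc, hclosed, hprod⟩, -⟩ := hg
  have hne : ∀ i, (gc i x).Nonempty := fun i => by
    rcases hclosed i x with h | h | h <;> rw [h]
    exacts [Set.singleton_nonempty _, Set.singleton_nonempty _, ⟨BM.zero, trivial⟩]
  choose y hy using hne
  exact ⟨y, hprod x ▸ hy⟩

lemma IsNatural.superpose_mem {m n : ℕ} {g : (Fin m → BM) → Set (Fin n → BM)}
    (hg : IsNatural g) {x : Fin m → BM} {y y' : Fin n → BM} (hy : y ∈ g x) (hy' : y' ∈ g x) :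
    (fun i => if y i = y' i then y i else BM.metastable) ∈ g x := by
  obtain ⟨⟨gc, hclosed, hprod⟩, -⟩ := hg
  rw [hprod] at hy hy' ⊢
  intro i
  dsimp only
  split_ifs with hyy'
  · exact hy i
  · have hsingle : ∀ b, gc i x ≠ {b} := fun b h => by
      have hyi := hy i
      have hy'i := hy' i
      simp only [h, Set.mem_singleton_iff] at hyi hy'i
      exact hyy' (hyi.trans hy'i.symm)
    rcases hclosed i x with h | h | h
    exacts [(hsingle _ h).elim, (hsingle _ h).elim, h ▸ Set.mem_univ _]

lemma copyNotMM_no_natural_subfunction :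
    ¬ ∃ g : (Fin 2 → BM) → Set (Fin 2 → BM), IsNatural g ∧ ∀ x, g x ⊆ copyNotMM x := by
  rintro ⟨g, hg, hsub⟩
  have hstable : ∀ b : Bool, (fun _ : Fin 2 => BM.ofBool b) ∈ g (fun _ => BM.metastable) := by
    intro b
    have hne : ∀ _ : Fin 2, BM.ofBool b ≠ BM.metastable := fun _ => by
      cases b <;> simp [BM.ofBool]
    obtain ⟨y, hy⟩ := hg.nonempty fun _ => BM.ofBool b
    have hyb := eq_of_inResM_of_stable hne (hsub _ hy).1
    exact hg.2 _ _ ⟨fun _ => Or.inr rfl, hne⟩ (hyb ▸ hy)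
  have hMM := hg.superpose_mem (hstable false) (hstable true)
  exact (hsub _ hMM).2 (funext fun _ => by simp [BM.ofBool])

lemma regRead_simple_self (b : BM) : regRead RegType.simple b (b, b) := by
  cases b <;> rfl

section OneRound

variable {m k n : ℕ} (C : Circuit m k n)

/-- What a circuit with only simple registers reads in its first round on input `ι`. -/
def firstRead (ι : Fin m → BM) : Fin (m + k) → BM :=
  Fin.append ι fun j => C.init (Fin.castAdd n j)

lemma readRel_initState_firstRead (hS : OnlySimple C) (ι : Fin m → BM) :
    ReadRel C (initState C ι) (firstRead C ι) ι := by
  constructor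
  · intro i
    simpa only [initState, firstRead, Fin.append_left, hS.1 i] using regRead_simple_self (ι i)
  · intro j
    refine ⟨C.init (Fin.castAdd n j), ?_⟩
    simpa only [initState, firstRead, Fin.append_right, hS.2.1 j] using
      regRead_simple_self (C.init (Fin.castAdd n j))

noncomputable def firstOutput (ι : Fin m → BM) : Fin n → BM :=
  fun i => evalLogic C (firstRead C ι) (Fin.natAdd k i)

lemma firstOutput_inResM {x y : Fin m → BM} (h : inResM x y) :
    inResM (firstOutput C x) (firstOutput C y) :=
  fun i => evalLogic_inResM C (h.append (inResM_refl _)) _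

lemma mem_cout_one_of_inResM (hS : OnlySimple C) {ι : Fin m → BM} {y : Fin n → BM}
    (hy : inResM (firstOutput C ι) y) : y ∈ Cout C 1 ι := by
  let w := evalLogic C (firstRead C ι)
  refine ⟨⟨ι, fun j => w (Fin.castAdd n j), y⟩, ⟨initState C ι, rfl, ?_⟩, rfl⟩
  refine ⟨firstRead C ι, ι, readRel_initState_firstRead C hS ι, rfl, ?_⟩
  have hw := (inResM_refl fun j => w (Fin.castAdd n j)).append hy
  unfold firstOutput at hw
  rwa [Fin.append_castAdd_natAdd] at hw

end OneRound

lemma exists_natural_subfunction_of_mem_funS_one {m n : ℕ}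
    {f : (Fin m → BM) → Set (Fin n → BM)} (hf : f ∈ FunS 1 m n) :
    ∃ g, IsNatural g ∧ ∀ x, g x ⊆ f x := by
  obtain ⟨k, C, hS, hC⟩ := hf
  exact ⟨fun ι => {y | inResM (firstOutput C ι) y},
    isNatural_setOf_inResM _ fun x y hxy => firstOutput_inResM C hxy.1,
    fun ι y hy => hC ι (mem_cout_one_of_inResM C hS hy)⟩

/-- `copyNotMM` has no natural subfunction, and consequently no
circuit with only simple registers implements it. -/
theorem copyNotMM_not_implementable :
    (¬ ∃ g : (Fin 2 → BM) → Set (Fin 2 → BM),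
        IsNatural g ∧ ∀ x, g x ⊆ copyNotMM x) ∧
    copyNotMM ∉ FunS 1 2 2 :=
  ⟨copyNotMM_no_natural_subfunction,
    fun hf => copyNotMM_no_natural_subfunction (exists_natural_subfunction_of_mem_funS_one hf)⟩
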